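/- arXiv:0804.3671 — 11 statements merged into one kernel-verified Lean document; each statement's English description precedes it below -/
import Mathlib

section
/- If c₁ and c₂ belong to C∘(w) and |c₁| < |c₂|, then c₁ is a proper suffix of c₂. In particular, any two elements of C∘(w) of the same length are equal, and every element of C∘(w) is a proper suffix of w. -/
/-! An autocorrelation `c` of `w` satisfies `w ++ c = e ++ w` with `|c| < |w|`, so `c` is a
suffix of `e ++ w` no longer than `w`, hence a suffix of `w`. Suffixes of one word are ordered by
length, which gives all three claims. -/

/-- Elementwise concatenation of two languages: `L₁·L₂`. -/
def lconc {α : Type*} (L₁ L₂ : Set (List α)) : Set (List α) :=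
  {x | ∃ a ∈ L₁, ∃ b ∈ L₂, x = a ++ b}

/-- Kleene star of a language: all finite concatenations of its elements. -/
def lstar {α : Type*} (L : Set (List α)) : Set (List α) :=
  {x | ∃ S : List (List α), (∀ y ∈ S, y ∈ L) ∧ x = S.flatten}

/-- `A⁺`: the set of nonempty words. -/
def Aplus (α : Type*) : Set (List α) := {x : List α | x ≠ []}

/-- `w` occurs at position `i` in `T`. -/
def occursAt {α : Type*} (w T : List α) (i : ℕ) : Prop :=
  ∃ x y : List α, T = x ++ w ++ y ∧ x.length = i

/-- The autocorrelation set `C(w)`. -/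
def Corr {α : Type*} (w : List α) : Set (List α) :=
  {c | c.length < w.length ∧ ∃ e, w ++ c = e ++ w}

/-- `C∘(w) = C(w) \ {[]}`. -/
def CorrPos {α : Type*} (w : List α) : Set (List α) := Corr w \ {[]}

/-- The prefix code `K(w) = C∘(w) \ C∘(w)·A⁺`. -/
def KCode {α : Type*} (w : List α) : Set (List α) :=
  CorrPos w \ lconc (CorrPos w) (Aplus α)

theorem suffix_of_mem_corr {α : Type*} {w c : List α} (hc : c ∈ Corr w) : c <:+ w := by
  obtain ⟨hlt, e, he⟩ := hc
  have hsuffix : c <:+ e ++ w := he ▸ List.suffix_append w c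
  exact List.suffix_of_suffix_length_le hsuffix (List.suffix_append e w) hlt.le

theorem suffix_of_mem_corr_of_length_le {α : Type*} {w c₁ c₂ : List α} (h₁ : c₁ ∈ Corr w)
    (h₂ : c₂ ∈ Corr w) (hlen : c₁.length ≤ c₂.length) : c₁ <:+ c₂ :=
  List.suffix_of_suffix_length_le (suffix_of_mem_corr h₁) (suffix_of_mem_corr h₂) hlen

theorem corrPos_suffix_structure_general {α : Type*} (w : List α) :
    (∀ c₁ ∈ CorrPos w, ∀ c₂ ∈ CorrPos w, c₁.length < c₂.length →
      c₁ <:+ c₂ ∧ c₁ ≠ c₂) ∧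
    (∀ c₁ ∈ CorrPos w, ∀ c₂ ∈ CorrPos w, c₁.length = c₂.length → c₁ = c₂) ∧
    (∀ c ∈ CorrPos w, c <:+ w ∧ c ≠ w) := by
  refine ⟨fun c₁ h₁ c₂ h₂ hlt => ⟨?_, ?_⟩, fun c₁ h₁ c₂ h₂ hlen => ?_, fun c hc => ⟨?_, ?_⟩⟩
  · exact suffix_of_mem_corr_of_length_le h₁.1 h₂.1 hlt.le
  · rintro rfl
    exact lt_irrefl _ hlt
  · exact (suffix_of_mem_corr_of_length_le h₁.1 h₂.1 hlen.le).eq_of_length hlen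
  · exact suffix_of_mem_corr hc.1
  · rintro rfl
    exact lt_irrefl _ hc.1.1

/-- elements of `C∘(w)` of smaller length are proper suffixes of longer
ones; elements of equal length coincide; every element is a proper suffix of `w`. -/
theorem corrPos_suffix_structure {α : Type*} (w : List α) (hw : w ≠ []) :
    (∀ c₁ ∈ CorrPos w, ∀ c₂ ∈ CorrPos w, c₁.length < c₂.length →
      c₁ <:+ c₂ ∧ c₁ ≠ c₂) ∧
    (∀ c₁ ∈ CorrPos w, ∀ c₂ ∈ CorrPos w, c₁.length = c₂.length → c₁ = c₂) ∧
    (∀ c ∈ CorrPos w, c <:+ w ∧ c ≠ w) :=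
  corrPos_suffix_structure_general w
end

section
/- The prefix code K(w) generates the star of the autocorrelation set: every element of C∘(w) is a concatenation of elements of K(w), and consequently the Kleene stars coincide, K(w)* = (C∘(w))* = C(w)*. -/
section Star

variable {α : Type*}

theorem subset_lstar {L : Set (List α)} : L ⊆ lstar L :=
  fun x hx => ⟨[x], by simpa using hx, by simp⟩

theorem append_mem_lstar {L : Set (List α)} {x y : List α} (hx : x ∈ lstar L)
    (hy : y ∈ lstar L) : x ++ y ∈ lstar L := by
  obtain ⟨S, hS, rfl⟩ := hx
  obtain ⟨T, hT, rfl⟩ := hy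
  exact ⟨S ++ T, by simpa [or_imp, forall_and] using ⟨hS, hT⟩, by simp⟩

theorem lstar_subset_lstar_of_subset {L M : Set (List α)} (h : L ⊆ lstar M) :
    lstar L ⊆ lstar M := by
  rintro _ ⟨S, hS, rfl⟩
  induction S with
  | nil => exact ⟨[], by simp, rfl⟩
  | cons x S ih =>
    simpa using append_mem_lstar (h (hS x (by simp))) (ih fun y hy => hS y (by simp [hy]))

theorem lstar_eq_lstar_of_subset {L M : Set (List α)} (hLM : L ⊆ lstar M)
    (hML : M ⊆ lstar L) : lstar L = lstar M :=
  (lstar_subset_lstar_of_subset hLM).antisymm (lstar_subset_lstar_of_subset hML)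

theorem lstar_diff_singleton_nil (L : Set (List α)) : lstar (L \ {[]}) = lstar L := by
  refine lstar_eq_lstar_of_subset (Set.sdiff_subset.trans subset_lstar) fun x hx => ?_
  by_cases hx₀ : x = []
  · exact ⟨[], by simp, by simp [hx₀]⟩
  · exact subset_lstar ⟨hx, hx₀⟩

theorem subset_lstar_diff_lconc_Aplus {L : Set (List α)} (hnil : [] ∉ L)
    (hquot : ∀ a ∈ L, ∀ b, b ≠ [] → a ++ b ∈ L → b ∈ L) :
    L ⊆ lstar (L \ lconc L (Aplus α)) := by
  intro c hc
  induction hn : c.length using Nat.strong_induction_on generalizing c with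
  | _ n ih =>
    by_cases hk : c ∈ lconc L (Aplus α)
    · obtain ⟨a, ha, b, hb, rfl⟩ := hk
      have ha₀ : a ≠ [] := fun h => hnil (h ▸ ha)
      have hb₀ : b ≠ [] := hb
      have hlen : a.length + b.length = n := by simpa using hn
      have := List.length_pos_iff.mpr ha₀
      have := List.length_pos_iff.mpr hb₀
      exact append_mem_lstar (ih _ (by omega) ha rfl) (ih _ (by omega) (hquot a ha b hb hc) rfl)
    · exact subset_lstar ⟨hc, hk⟩

end Star

theorem mem_corr_of_append_mem_corr {α : Type*} {w a b : List α} (ha : a ∈ Corr w)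
    (hab : a ++ b ∈ Corr w) : b ∈ Corr w := by
  obtain ⟨-, f, hf⟩ := ha
  obtain ⟨hlen, e, he⟩ := hab
  refine ⟨by simp only [List.length_append] at hlen; omega, ?_⟩
  have hshift : f ++ (w ++ b) = e ++ w := by rw [← List.append_assoc, ← hf, List.append_assoc, he]
  rcases List.append_eq_append_iff.mp hshift with ⟨e', -, hb⟩ | ⟨c', -, hw⟩
  · exact ⟨e', hb⟩
  · have hb₀ : b = [] := by
      have := congrArg List.length hw
      simp only [List.length_append] at this
      exact List.length_eq_zero_iff.mp (by omega)
    exact ⟨[], by simp [hb₀]⟩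

theorem kcode_generates_star_general {α : Type*} (w : List α) :
    (∀ c ∈ CorrPos w, ∃ S : List (List α), (∀ κ ∈ S, κ ∈ KCode w) ∧ c = S.flatten) ∧
    lstar (KCode w) = lstar (CorrPos w) ∧ lstar (CorrPos w) = lstar (Corr w) := by
  have hdecomp : CorrPos w ⊆ lstar (KCode w) :=
    subset_lstar_diff_lconc_Aplus (fun h => h.2 rfl) fun a ha b hb hab =>
      ⟨mem_corr_of_append_mem_corr ha.1 hab.1, hb⟩
  exact ⟨fun c hc => hdecomp hc, lstar_eq_lstar_of_subset (fun c hc => subset_lstar hc.1) hdecomp,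
    lstar_diff_singleton_nil (Corr w)⟩

/-- `K(w)` generates the star of the autocorrelation set:
every element of `C∘(w)` is a concatenation of elements of `K(w)`, and
`K(w)* = (C∘(w))* = C(w)*`. -/
theorem kcode_generates_star {α : Type*} (w : List α) (hw : w ≠ []) :
    (∀ c ∈ CorrPos w, ∃ S : List (List α), (∀ κ ∈ S, κ ∈ KCode w) ∧ c = S.flatten) ∧
    lstar (KCode w) = lstar (CorrPos w) ∧ lstar (CorrPos w) = lstar (Corr w) :=
  kcode_generates_star_general w
end

section
/- K(w) generates C(w)* unambiguously: if κ₁, …, κ_s and κ'₁, …, κ'_t are elements of K(w) with κ₁ ++ ⋯ ++ κ_s = κ'₁ ++ ⋯ ++ κ'_t, then s = t and κ_i = κ'_i for all i; i.e., every word of K(w)* has exactly one factorization into elements of K(w). -/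
section PrefixCode

variable {α : Type*}

def IsPrefixCode (L : Set (List α)) : Prop :=
  [] ∉ L ∧ ∀ a ∈ L, ∀ b ∈ L, a <+: b → a = b

variable {L : Set (List α)}

theorem IsPrefixCode.eq_of_flatten_eq (hL : IsPrefixCode L) {S₁ S₂ : List (List α)}
    (h₁ : ∀ x ∈ S₁, x ∈ L) (h₂ : ∀ x ∈ S₂, x ∈ L) (heq : S₁.flatten = S₂.flatten) :
    S₁ = S₂ := by
  induction S₁ generalizing S₂ with
  | nil =>
    cases S₂ with
    | nil => rfl
    | cons b t =>
      have hb : b = [] := by simp_all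
      exact absurd (hb ▸ h₂ b (by simp)) hL.1
  | cons a s ih =>
    cases S₂ with
    | nil =>
      have ha : a = [] := by simp_all
      exact absurd (ha ▸ h₁ a (by simp)) hL.1
    | cons b t =>
      rw [List.flatten_cons, List.flatten_cons] at heq
      have ha : a ∈ L := h₁ a (by simp)
      have hb : b ∈ L := h₂ b (by simp)
      have hab : a = b := by
        rcases List.prefix_or_prefix_of_prefix (List.prefix_append a s.flatten)
            (heq ▸ List.prefix_append b t.flatten) with h | h
        · exact hL.2 a ha b hb h
        · exact (hL.2 b hb a ha h).symm
      subst hab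
      rw [ih (fun x hx => h₁ x (List.mem_cons_of_mem a hx))
        (fun x hx => h₂ x (List.mem_cons_of_mem a hx)) (List.append_cancel_left heq)]

end PrefixCode

theorem isPrefixCode_kCode {α : Type*} (w : List α) : IsPrefixCode (KCode w) := by
  refine ⟨fun h => h.1.2 rfl, fun a ha b hb ⟨c, hc⟩ => ?_⟩
  subst hc
  rcases eq_or_ne c [] with rfl | hc
  · simp
  · exact absurd ⟨a, ha.1, c, hc, rfl⟩ hb.2

theorem kcode_unique_factorization_general {α : Type*} (w : List α)
    (S₁ S₂ : List (List α))
    (h₁ : ∀ κ ∈ S₁, κ ∈ KCode w) (h₂ : ∀ κ ∈ S₂, κ ∈ KCode w)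
    (heq : S₁.flatten = S₂.flatten) : S₁ = S₂ :=
  (isPrefixCode_kCode w).eq_of_flatten_eq h₁ h₂ heq

/-- `K(w)` generates `C(w)*` unambiguously: factorizations of a word
into elements of `K(w)` are unique. -/
theorem kcode_unique_factorization {α : Type*} (w : List α) (hw : w ≠ [])
    (S₁ S₂ : List (List α))
    (h₁ : ∀ κ ∈ S₁, κ ∈ KCode w) (h₂ : ∀ κ ∈ S₂, κ ∈ KCode w)
    (heq : S₁.flatten = S₂.flatten) : S₁ = S₂ :=
  kcode_unique_factorization_general w S₁ S₂ h₁ h₂ heq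
end

section
/- K(w) is contained in the minimal language: K(w) ⊆ M(w). -/
/-- The minimal language `M(w)`: nonempty words `m` such that `w ++ m` ends with `w`
and every occurrence of `w` in `w ++ m` is at position `0` or at position `|m|`. -/
def MinLang {α : Type*} (w : List α) : Set (List α) :=
  {m | m ≠ [] ∧ (∃ e, w ++ m = e ++ w) ∧
    ∀ i, occursAt w (w ++ m) i → i = 0 ∨ i = m.length}

/-! A word `k ∈ K(w)` with an occurrence of `w` in `w ++ k` strictly between `0` and `|k|`,
say at position `i`, would have its proper prefix `k.take i` in `C∘(w)`, because `w ++ k.take i`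
and the prefix of `w ++ k` ending with that occurrence are prefixes of `w ++ k` of equal length.
Then `k = k.take i ++ k.drop i ∈ C∘(w)·A⁺`, contradicting `k ∈ K(w)`. -/

section

variable {α : Type*} {w T k : List α} {i : ℕ}

lemma occursAt.add_length_le (h : occursAt w T i) : i + w.length ≤ T.length := by
  obtain ⟨x, y, rfl, rfl⟩ := h
  simp only [List.length_append]
  omega

lemma occursAt.append_take_eq (h : occursAt w (w ++ k) i) (hi : i ≤ k.length) :
    ∃ e, w ++ k.take i = e ++ w := by
  obtain ⟨x, y, hT, rfl⟩ := h
  have hpre : w ++ k.take x.length <+: w ++ k :=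
    (List.prefix_append_right_inj w).mpr (List.take_prefix _ k)
  have hocc : x ++ w <+: w ++ k := hT ▸ List.prefix_append (x ++ w) y
  have hlen : (w ++ k.take x.length).length = (x ++ w).length := by
    simp only [List.length_append, List.length_take]
    omega
  exact ⟨x, (List.prefix_of_prefix_length_le hpre hocc hlen.le).eq_of_length hlen⟩

lemma take_mem_corrPos_of_occursAt (hk : k.length < w.length) (h : occursAt w (w ++ k) i)
    (hi0 : i ≠ 0) (hik : i < k.length) : k.take i ∈ CorrPos w := by
  have hlen : (k.take i).length = i := List.length_take_of_le hik.le
  refine ⟨⟨by omega, h.append_take_eq hik.le⟩, fun hnil => hi0 ?_⟩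
  rw [← hlen, hnil, List.length_nil]

end

theorem kcode_subset_minLang_general {α : Type*} (w : List α) :
    KCode w ⊆ MinLang w := by
  rintro k ⟨⟨⟨hk, e, he⟩, hne⟩, hnotc⟩
  refine ⟨hne, ⟨e, he⟩, fun i hocc => ?_⟩
  by_contra! hi
  have hik : i < k.length := by
    have := hocc.add_length_le
    simp only [List.length_append] at this
    omega
  refine hnotc ⟨k.take i, take_mem_corrPos_of_occursAt hk hocc hi.1 hik, k.drop i, ?_,
    (List.take_append_drop i k).symm⟩
  simpa [Aplus, List.drop_eq_nil_iff] using hik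

/-- `K(w) ⊆ M(w)`. -/
theorem kcode_subset_minLang {α : Type*} (w : List α) (hw : w ≠ []) :
    KCode w ⊆ MinLang w :=
  kcode_subset_minLang_general w
end

section
/- The minimal language meets the autocorrelation set exactly in the prefix code: M(w) ∩ C∘(w) = K(w). In particular, if v ∈ C∘(w) and v ∉ K(w), then v ∉ M(w). -/
/-! An occurrence of `w` in `w ++ v` at a position `0 < i < |v|` amounts to a factorization
`v = c ++ t` with `c ∈ C∘(w)` and `t ≠ []`: take `c = v.take i`, and conversely such a `c`
places an occurrence of `w` at `|c|`. Hence a word of `C∘(w)` has no interior occurrence of `w`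
exactly when it lies outside `C∘(w)·A⁺`. -/

section

variable {α : Type*} {w v : List α}

theorem occursAt.length_add_le {T : List α} {i : ℕ} (h : occursAt w T i) :
    i + w.length ≤ T.length := by
  obtain ⟨x, y, rfl, rfl⟩ := h
  simp

theorem occursAt_of_append_eq {c e : List α} (h : w ++ c = e ++ w) (t : List α) :
    occursAt w (w ++ (c ++ t)) c.length := by
  refine ⟨e, t, by rw [← List.append_assoc, h], ?_⟩
  have := congrArg List.length h
  simp only [List.length_append] at this
  omega

theorem occursAt.exists_append_take_eq {i : ℕ} (h : occursAt w (w ++ v) i) :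
    ∃ e, w ++ v.take i = e ++ w := by
  obtain ⟨x, y, hxy, rfl⟩ := h
  refine ⟨x, ?_⟩
  have := congrArg (List.take (w.length + x.length)) hxy
  rw [List.append_assoc, List.take_append, List.take_append] at this
  simpa [List.take_of_length_le (Nat.le_add_right w.length x.length),
    List.take_of_length_le (Nat.le_add_left x.length w.length)] using this

theorem notMem_lconc_of_mem_minLang (hv : v ∈ MinLang w) :
    v ∉ lconc (CorrPos w) (Aplus α) := by
  rintro ⟨c, ⟨⟨-, e, hce⟩, hc⟩, t, ht, rfl⟩
  rcases hv.2.2 _ (occursAt_of_append_eq hce t) with hc₀ | hct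
  · exact hc (List.length_eq_zero_iff.mp hc₀)
  · exact ht (List.length_eq_zero_iff.mp (by simpa using hct))

theorem mem_minLang_of_mem_kCode (hv : v ∈ KCode w) : v ∈ MinLang w := by
  obtain ⟨⟨⟨hlen, e, he⟩, hv₀⟩, hdecomp⟩ := hv
  refine ⟨hv₀, ⟨e, he⟩, fun i hi => ?_⟩
  by_contra! hmid
  have hiv : i < v.length := by
    have := hi.length_add_le
    simp only [List.length_append] at this
    omega
  refine hdecomp ⟨v.take i, ⟨⟨?_, hi.exists_append_take_eq⟩, ?_⟩, v.drop i, ?_,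
    (List.take_append_drop i v).symm⟩
  · simp only [List.length_take]
    omega
  · rw [Set.mem_singleton_iff, List.take_eq_nil_iff]
    exact fun h => h.elim hmid.1 hv₀
  · simpa [Aplus] using hiv

end

theorem minLang_inter_corrPos_general {α : Type*} (w : List α) :
    MinLang w ∩ CorrPos w = KCode w ∧
    (∀ v ∈ CorrPos w, v ∉ KCode w → v ∉ MinLang w) := by
  have key : MinLang w ∩ CorrPos w = KCode w := Set.ext fun v =>
    ⟨fun ⟨hm, hc⟩ => ⟨hc, notMem_lconc_of_mem_minLang hm⟩,
      fun hk => ⟨mem_minLang_of_mem_kCode hk, hk.1⟩⟩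
  exact ⟨key, fun v hv hk hm => hk (key ▸ ⟨hm, hv⟩)⟩

/-- `M(w) ∩ C∘(w) = K(w)`; in particular an element of `C∘(w)`
outside `K(w)` is not in `M(w)`. -/
theorem minLang_inter_corrPos {α : Type*} (w : List α) (hw : w ≠ []) :
    MinLang w ∩ CorrPos w = KCode w ∧
    (∀ v ∈ CorrPos w, v ∉ KCode w → v ∉ MinLang w) :=
  minLang_inter_corrPos_general w
end

section
/- Every element of M(w) that does not belong to K(w) has w as a suffix; that is, M(w) \ K(w) ⊆ A*·{w}, so there is a language L with M(w) \ K(w) = L·{w}. -/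
theorem suffix_of_append_eq_append_of_length_le {α : Type*} {w m e : List α}
    (h : w ++ m = e ++ w) (hlen : w.length ≤ m.length) : w <:+ m :=
  List.suffix_of_suffix_length_le (h ▸ List.suffix_append e w) (List.suffix_append w m) hlen

/-- A nonempty proper period `c` of `w` that is a proper prefix of `m` gives an occurrence of `w`
in `w ++ m` at position `|c|`, strictly between `0` and `|m|`. -/
theorem notMem_lconc_corrPos_aplus_of_mem_minLang {α : Type*} {w m : List α}
    (hm : m ∈ MinLang w) : m ∉ lconc (CorrPos w) (Aplus α) := by
  rintro ⟨c, hc, a, ha, rfl⟩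
  obtain ⟨⟨-, e, he⟩, hc0⟩ := hc
  have hocc : occursAt w (w ++ (c ++ a)) e.length :=
    ⟨e, a, by rw [← List.append_assoc, he], rfl⟩
  have hec : e.length = c.length := by
    have := congrArg List.length he
    simp only [List.length_append] at this
    omega
  have ha0 : a.length ≠ 0 := fun h => ha (List.length_eq_zero_iff.mp h)
  rcases hm.2.2 _ hocc with h | h
  · exact hc0 (List.length_eq_zero_iff.mp (hec ▸ h))
  · simp only [List.length_append] at h
    omega

theorem mem_kCode_of_mem_minLang_of_length_lt {α : Type*} {w m : List α}
    (hm : m ∈ MinLang w) (hlen : m.length < w.length) : m ∈ KCode w :=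
  ⟨⟨⟨hlen, hm.2.1⟩, hm.1⟩, notMem_lconc_corrPos_aplus_of_mem_minLang hm⟩

theorem suffix_of_mem_minLang_sdiff_kCode {α : Type*} {w m : List α}
    (hm : m ∈ MinLang w \ KCode w) : w <:+ m := by
  obtain ⟨e, he⟩ := hm.1.2.1
  exact suffix_of_append_eq_append_of_length_le he <| not_lt.mp fun hlt =>
    hm.2 (mem_kCode_of_mem_minLang_of_length_lt hm.1 hlt)

theorem mem_lconc_univ_singleton_iff {α : Type*} {w m : List α} :
    m ∈ lconc (Set.univ : Set (List α)) {w} ↔ w <:+ m := by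
  constructor
  · rintro ⟨a, -, b, rfl, rfl⟩
    exact List.suffix_append a b
  · rintro ⟨a, rfl⟩
    exact ⟨a, trivial, w, rfl, rfl⟩

theorem eq_lconc_singleton_of_subset_lconc_univ {α : Type*} {S : Set (List α)} {w : List α}
    (hS : S ⊆ lconc (Set.univ : Set (List α)) {w}) : S = lconc {a | a ++ w ∈ S} {w} := by
  ext m
  constructor
  · intro hm
    obtain ⟨a, -, b, hb, rfl⟩ := hS hm
    exact ⟨a, hb ▸ hm, b, hb, rfl⟩
  · rintro ⟨a, ha, b, hb, rfl⟩
    exact hb ▸ ha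

theorem minLang_sdiff_kcode_general {α : Type*} (w : List α) :
    MinLang w \ KCode w ⊆ lconc (Set.univ : Set (List α)) {w} ∧
    ∃ L : Set (List α), MinLang w \ KCode w = lconc L {w} := by
  have hsub : MinLang w \ KCode w ⊆ lconc (Set.univ : Set (List α)) {w} := fun _ hm =>
    mem_lconc_univ_singleton_iff.mpr (suffix_of_mem_minLang_sdiff_kCode hm)
  exact ⟨hsub, _, eq_lconc_singleton_of_subset_lconc_univ hsub⟩

/-- `M(w) \ K(w) ⊆ A*·{w}`, hence `M(w) \ K(w) = L·{w}` for
some language `L`. -/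
theorem minLang_sdiff_kcode {α : Type*} (w : List α) (hw : w ≠ []) :
    MinLang w \ KCode w ⊆ lconc (Set.univ : Set (List α)) {w} ∧
    ∃ L : Set (List α), MinLang w \ KCode w = lconc L {w} :=
  minLang_sdiff_kcode_general w
end

section
/- The decomposition along occurrences is unambiguous: for every word T over α in which w occurs at least once, there exist a unique r ∈ R(w), a unique u ∈ U(w), and a unique finite list ℓ = (m₁, …, m_s) of words, each belonging to M(w), such that T = r ++ m₁ ++ ⋯ ++ m_s ++ u. -/
/-- The "Right" language `R(w)`: words in which `w` occurs exactly once,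
at the right extremity. -/
def RightLang {α : Type*} (w : List α) : Set (List α) :=
  {r | occursAt w r (r.length - w.length) ∧
    ∀ i, occursAt w r i → i = r.length - w.length}

/-- The "Ultimate" language `U(w)`: words `u` such that the only occurrence of `w`
in `w ++ u` is at position `0`. -/
def UltLang {α : Type*} (w : List α) : Set (List α) :=
  {u | ∀ i, occursAt w (w ++ u) i → i = 0}

/-- The "Not" language `N(w)`: words with no occurrence of `w`. -/
def NotLang {α : Type*} (w : List α) : Set (List α) :=
  {t | ∀ i, ¬ occursAt w t i}

/-!
Reading `T` from the left, `r` must end at the first occurrence of `w`; after that, each block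
`mᵢ` must end at the next occurrence of `w` in `w ++ (rest)`, and `u` is what remains once no
further occurrence exists. Uniqueness holds because `R(w)` and `M(w)` are prefix-free and no
element of `U(w)` begins with an element of `M(w)`, so the factors are read off greedily.
-/

section

open List

variable {α : Type*}

def IsPrefixFree (L : Set (List α)) : Prop :=
  ∀ a ∈ L, ∀ b ∈ L, a <+: b → a = b

namespace IsPrefixFree

variable {M U : Set (List α)}

theorem eq_of_append_eq (hM : IsPrefixFree M) {a b s t : List α} (ha : a ∈ M) (hb : b ∈ M)
    (h : a ++ s = b ++ t) : a = b :=
  (prefix_or_prefix_of_prefix ⟨s, rfl⟩ ⟨t, h.symm⟩).elim (hM a ha b hb)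
    fun hba => (hM b hb a ha hba).symm

theorem flatten_append_inj (hM : IsPrefixFree M) (hMU : ∀ m ∈ M, ∀ u ∈ U, ¬ m <+: u) :
    ∀ {l₁ l₂ : List (List α)} {u₁ u₂ : List α}, (∀ m ∈ l₁, m ∈ M) → (∀ m ∈ l₂, m ∈ M) →
      u₁ ∈ U → u₂ ∈ U → l₁.flatten ++ u₁ = l₂.flatten ++ u₂ → l₁ = l₂ ∧ u₁ = u₂
  | [], [], _, _, _, _, _, _, h => ⟨rfl, h⟩
  | [], m :: l, _, u₂, _, hl₂, hu₁, _, h =>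
    absurd ⟨l.flatten ++ u₂, by simpa using h.symm⟩ (hMU m (hl₂ m mem_cons_self) _ hu₁)
  | m :: l, [], u₁, _, hl₁, _, _, hu₂, h =>
    absurd ⟨l.flatten ++ u₁, by simpa using h⟩ (hMU m (hl₁ m mem_cons_self) _ hu₂)
  | m₁ :: l₁, m₂ :: l₂, _, _, hl₁, hl₂, hu₁, hu₂, h => by
    simp only [flatten_cons, append_assoc] at h
    obtain rfl := hM.eq_of_append_eq (hl₁ m₁ mem_cons_self) (hl₂ m₂ mem_cons_self) h
    obtain ⟨rfl, rfl⟩ := flatten_append_inj hM hMU (fun m hm => hl₁ m (mem_cons_of_mem _ hm))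
      (fun m hm => hl₂ m (mem_cons_of_mem _ hm)) hu₁ hu₂ (append_cancel_left h)
    exact ⟨rfl, rfl⟩

end IsPrefixFree

namespace occursAt

variable {w T : List α} {i : ℕ}

theorem add_length_le_s10 (h : occursAt w T i) : i + w.length ≤ T.length := by
  obtain ⟨x, y, rfl, rfl⟩ := h
  simp

theorem append_right (h : occursAt w T i) (S : List α) : occursAt w (T ++ S) i := by
  obtain ⟨x, y, rfl, hx⟩ := h
  exact ⟨x, y ++ S, by simp, hx⟩

theorem of_prefix {P : List α} (h : occursAt w T i) (hP : P <+: T)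
    (hi : i + w.length ≤ P.length) : occursAt w P i := by
  obtain ⟨x, y, rfl, hx⟩ := h
  obtain ⟨y', hy'⟩ :=
    prefix_of_prefix_length_le (prefix_append (x ++ w) y) hP (by simp [hx, hi])
  exact ⟨x, y', hy'.symm, hx⟩

end occursAt

section Languages

variable {w : List α}

theorem occursAt_append_of_mem_minLang {m : List α} (hm : m ∈ MinLang w) (v : List α) :
    occursAt w (w ++ (m ++ v)) m.length := by
  obtain ⟨-, ⟨e, he⟩, -⟩ := hm
  refine ⟨e, v, by rw [← append_assoc, he, append_assoc], ?_⟩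
  have := congrArg length he
  simp only [length_append] at this
  omega

theorem minLang_isPrefixFree (w : List α) : IsPrefixFree (MinLang w) := by
  rintro m₁ hm₁ m₂ ⟨-, -, hocc₂⟩ ⟨d, rfl⟩
  rcases hocc₂ _ (occursAt_append_of_mem_minLang hm₁ d) with h | h
  · exact absurd (length_eq_zero_iff.mp h) hm₁.1
  · simpa using h

theorem not_prefix_of_mem_minLang_of_mem_ultLang {m u : List α} (hm : m ∈ MinLang w)
    (hu : u ∈ UltLang w) : ¬ m <+: u := by
  rintro ⟨v, rfl⟩
  exact hm.1 (length_eq_zero_iff.mp (hu _ (occursAt_append_of_mem_minLang hm v)))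

theorem rightLang_isPrefixFree (w : List α) : IsPrefixFree (RightLang w) := by
  rintro r ⟨hocc, -⟩ _ ⟨-, huniq⟩ ⟨d, rfl⟩
  have hw_le := hocc.add_length_le_s10
  have := huniq _ (hocc.append_right d)
  simp only [length_append] at this
  simpa using (show d.length = 0 by omega)

theorem take_mem_rightLang {T : List α} {p : ℕ} (hp : occursAt w T p)
    (hmin : ∀ i, occursAt w T i → p ≤ i) : T.take (p + w.length) ∈ RightLang w := by
  have hT := hp.add_length_le_s10
  have hlen : (T.take (p + w.length)).length - w.length = p := by simp; omega
  constructor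
  · rw [hlen]
    exact hp.of_prefix (take_prefix _ T) (by simp; omega)
  intro i hi
  rw [hlen]
  have hiT : occursAt w T i := by simpa using hi.append_right (T.drop (p + w.length))
  have hi_le := hi.add_length_le_s10
  have := hmin i hiT
  simp only [length_take] at hi_le
  omega

theorem take_mem_minLang {z : List α} {q : ℕ} (hq0 : 0 < q) (hq : occursAt w (w ++ z) q)
    (hmin : ∀ i, 0 < i → occursAt w (w ++ z) i → q ≤ i) : z.take q ∈ MinLang w := by
  have hqz := hq.add_length_le_s10
  simp only [length_append] at hqz
  have hlen : (z.take q).length = q := by simp; omega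
  have hpre : w ++ z.take q <+: w ++ z := prefix_append_right_inj w |>.2 (take_prefix q z)
  refine ⟨ne_nil_of_length_pos (by omega), ?_, fun i hi => ?_⟩
  · obtain ⟨x, y, hxy, hx⟩ := hq.of_prefix hpre (by simp; omega)
    have hy : y = [] := by
      have := congrArg length hxy
      simp only [length_append] at this
      exact length_eq_zero_iff.mp (by omega)
    exact ⟨x, by simpa [hy] using hxy⟩
  · have hiz : occursAt w (w ++ z) i := by
      simpa [append_assoc] using hi.append_right (z.drop q)
    have hi_le := hi.add_length_le_s10
    simp only [length_append, hlen] at hi_le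
    rcases Nat.eq_zero_or_pos i with h0 | hpos
    · exact Or.inl h0
    · have := hmin i hpos hiz
      omega

theorem exists_flatten_append_ultLang (w z : List α) :
    ∃ (l : List (List α)) (u : List α),
      (∀ m ∈ l, m ∈ MinLang w) ∧ u ∈ UltLang w ∧ z = l.flatten ++ u := by
  classical
  by_cases h : ∃ q, 0 < q ∧ occursAt w (w ++ z) q
  · obtain ⟨hq0, hq⟩ := Nat.find_spec h
    have hm := take_mem_minLang hq0 hq fun i hi0 hi => Nat.find_min' h ⟨hi0, hi⟩
    have hqz := hq.add_length_le_s10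
    simp only [length_append] at hqz
    have : (z.drop (Nat.find h)).length < z.length := by simp; omega
    obtain ⟨l, u, hl, hu, hz⟩ := exists_flatten_append_ultLang w (z.drop (Nat.find h))
    refine ⟨z.take (Nat.find h) :: l, u, forall_mem_cons.2 ⟨hm, hl⟩, hu, ?_⟩
    rw [flatten_cons, append_assoc, ← hz, take_append_drop]
  · refine ⟨[], z, by simp, fun i hi => ?_, by simp⟩
    by_contra hi0
    exact h ⟨i, Nat.pos_of_ne_zero hi0, hi⟩
termination_by z.length

end Languages

end

theorem decomposition_unique_general {α : Type*} (w : List α)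
    (T : List α) (hT : ∃ i, occursAt w T i) :
    ∃! rlu : List α × List (List α) × List α,
      rlu.1 ∈ RightLang w ∧ (∀ m ∈ rlu.2.1, m ∈ MinLang w) ∧
      rlu.2.2 ∈ UltLang w ∧ T = rlu.1 ++ rlu.2.1.flatten ++ rlu.2.2 := by
  classical
  set r := T.take (Nat.find hT + w.length)
  have hr : r ∈ RightLang w := take_mem_rightLang (Nat.find_spec hT) fun i => Nat.find_min' hT
  obtain ⟨l, u, hl, hu, hz⟩ := exists_flatten_append_ultLang w (T.drop (Nat.find hT + w.length))
  have hTr : T = r ++ (l.flatten ++ u) := by rw [← hz, List.take_append_drop]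
  refine ⟨(r, l, u), ⟨hr, hl, hu, by rw [hTr, List.append_assoc]⟩, ?_⟩
  rintro ⟨r', l', u'⟩ ⟨hr', hl', hu', hT'⟩
  rw [List.append_assoc, hTr] at hT'
  obtain rfl := (rightLang_isPrefixFree w).eq_of_append_eq hr' hr hT'.symm
  obtain ⟨rfl, rfl⟩ := (minLang_isPrefixFree w).flatten_append_inj
    (fun _ hm _ hu => not_prefix_of_mem_minLang_of_mem_ultLang hm hu) hl' hl hu' hu
    (List.append_cancel_left hT'.symm)
  rfl

/-- every text containing `w` has a unique decomposition
`T = r ++ m₁ ++ ⋯ ++ m_s ++ u` with `r ∈ R(w)`, each `m_i ∈ M(w)`, `u ∈ U(w)`. -/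
theorem decomposition_unique {α : Type*} (w : List α) (hw : w ≠ [])
    (T : List α) (hT : ∃ i, occursAt w T i) :
    ∃! rlu : List α × List (List α) × List α,
      rlu.1 ∈ RightLang w ∧ (∀ m ∈ rlu.2.1, m ∈ MinLang w) ∧
      rlu.2.2 ∈ UltLang w ∧ T = rlu.1 ++ rlu.2.1.flatten ++ rlu.2.2 :=
  decomposition_unique_general w T hT
end

section
/- A clump built from m elements of the prefix code contains exactly m+1 occurrences: for any κ₁, …, κ_m ∈ K(w), the word v = w ++ κ₁ ++ ⋯ ++ κ_m contains exactly m+1 occurrences of w, namely at the positions |w ++ κ₁ ++ ⋯ ++ κ_i| − |w| for i = 0, 1, …, m, and at no other position. -/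
/-!
Every `κ ∈ K(w)` satisfies `w ++ κ = e ++ w` with `|e| = |κ|`, so each prefix
`w ++ κ₁ ++ ⋯ ++ κ_t` ends in `w`, which gives the listed occurrences. Conversely, an
occurrence strictly inside the first block `κ₁` would overlap the occurrence at `0` and
turn a proper nonempty prefix of `κ₁` into a nonempty autocorrelation word, which the
prefix code `K(w)` forbids; an occurrence at or past `|κ₁|` is one in `w ++ κ₂ ++ ⋯ ++ κ_m`
shifted by `|κ₁|`. The listed positions are distinct because the `κᵢ` are nonempty.
-/

namespace Clump

variable {α : Type*}

lemma occursAt_append_left_iff {w u T : List α} {j : ℕ} :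
    occursAt w (u ++ T) (u.length + j) ↔ occursAt w T j := by
  constructor
  · rintro ⟨x, y, hT, hx⟩
    obtain ⟨x', rfl⟩ : u <+: x :=
      List.prefix_of_prefix_length_le ⟨T, rfl⟩ ⟨w ++ y, by rw [hT, List.append_assoc]⟩
        (by omega)
    refine ⟨x', y, by simpa [List.append_assoc] using hT, ?_⟩
    simp only [List.length_append] at hx
    omega
  · rintro ⟨x, y, rfl, rfl⟩
    exact ⟨u ++ x, y, by simp, by simp⟩

lemma take_mem_corr_of_append_eq {w y e y' : List α} (h : w ++ y = e ++ w ++ y')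
    (he : e.length < w.length) : y.take e.length ∈ Corr w := by
  refine ⟨(List.length_take_le _ _).trans_lt he, e, ?_⟩
  have := congrArg (List.take (w.length + e.length)) h
  rwa [List.take_length_add_append, add_comm, List.take_left' (by simp)] at this

lemma take_mem_corrPos_of_occursAt {w u : List α} {i : ℕ}
    (h : occursAt w (w ++ u) i) (hi : 0 < i) (hiw : i < w.length) :
    u.take i ∈ CorrPos w := by
  obtain ⟨x, y, hT, rfl⟩ := h
  refine ⟨take_mem_corr_of_append_eq hT hiw, fun hnil => ?_⟩
  have hlen := congrArg List.length hT
  simp only [List.length_append] at hlen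
  have : (u.take x.length).length = 0 := by rw [Set.mem_singleton_iff.mp hnil]; rfl
  simp only [List.length_take] at this
  omega

lemma take_notMem_corrPos_of_mem_kCode {w κ : List α} (hκ : κ ∈ KCode w) {i : ℕ}
    (hi : i < κ.length) : κ.take i ∉ CorrPos w := fun hc =>
  hκ.2 ⟨κ.take i, hc, κ.drop i, by simpa [Aplus] using hi, (List.take_append_drop i κ).symm⟩

lemma suffix_append_flatten {w : List α} {κs : List (List α)}
    (h : ∀ κ ∈ κs, w <:+ w ++ κ) : w <:+ w ++ κs.flatten := by
  induction κs with
  | nil => simp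
  | cons κ κs ih =>
    obtain ⟨e, he⟩ := h κ List.mem_cons_self
    have hshift : w ++ (κ :: κs).flatten = e ++ (w ++ κs.flatten) := by
      rw [List.flatten_cons, ← List.append_assoc, ← he, List.append_assoc]
    rw [hshift]
    exact (ih fun κ' hκ' => h κ' (List.mem_cons_of_mem _ hκ')).trans (List.suffix_append e _)

lemma occursAt_of_suffix {w u : List α} (h : w <:+ w ++ u) (v : List α) :
    occursAt w (w ++ u ++ v) u.length := by
  obtain ⟨e, he⟩ := h
  refine ⟨e, v, by rw [← he], ?_⟩
  have := congrArg List.length he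
  simp only [List.length_append] at this
  omega

lemma suffix_append_of_mem_corr {w κ : List α} (hκ : κ ∈ Corr w) : w <:+ w ++ κ :=
  let ⟨e, he⟩ := hκ.2
  ⟨e, he.symm⟩

variable {w : List α} {κs : List (List α)}

lemma occursAt_length_flatten_take (hκ : ∀ κ ∈ κs, κ ∈ Corr w) (t : ℕ) :
    occursAt w (w ++ κs.flatten) (κs.take t).flatten.length := by
  have hsuff : w <:+ w ++ (κs.take t).flatten := suffix_append_flatten fun κ hκt =>
    suffix_append_of_mem_corr (hκ κ (List.mem_of_mem_take hκt))
  have := occursAt_of_suffix hsuff (κs.drop t).flatten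
  rwa [List.append_assoc, ← List.flatten_append, List.take_append_drop] at this

lemma exists_eq_length_flatten_take_of_occursAt (hκ : ∀ κ ∈ κs, κ ∈ KCode w) {i : ℕ}
    (h : occursAt w (w ++ κs.flatten) i) :
    ∃ t ≤ κs.length, i = (κs.take t).flatten.length := by
  induction κs generalizing i with
  | nil =>
    obtain ⟨x, y, hT, rfl⟩ := h
    have := congrArg List.length hT
    simp only [List.flatten_nil, List.append_nil, List.length_append] at this
    exact ⟨0, le_rfl, by simp only [List.take_zero, List.flatten_nil, List.length_nil]; omega⟩
  | cons κ κs ih =>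
    have hκ₁ := hκ κ List.mem_cons_self
    rw [List.flatten_cons] at h
    by_cases hi : i < κ.length
    · rcases Nat.eq_zero_or_pos i with rfl | hi₀
      · exact ⟨0, Nat.zero_le _, rfl⟩
      have hc := take_mem_corrPos_of_occursAt h hi₀ (hi.trans hκ₁.1.1.1)
      rw [List.take_append_of_le_length hi.le] at hc
      exact absurd hc (take_notMem_corrPos_of_mem_kCode hκ₁ hi)
    · obtain ⟨e, he⟩ := hκ₁.1.1.2
      have he_len : e.length = κ.length := by
        have := congrArg List.length he
        simp only [List.length_append] at this
        omega
      rw [← List.append_assoc, he, List.append_assoc,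
        show i = e.length + (i - κ.length) by omega, occursAt_append_left_iff] at h
      obtain ⟨t, ht, hteq⟩ := ih (fun κ' hκ' => hκ κ' (List.mem_cons_of_mem _ hκ')) h
      refine ⟨t + 1, by simpa using ht, ?_⟩
      simp only [List.take_succ_cons, List.flatten_cons, List.length_append]
      omega

lemma occursAt_iff_exists_length_flatten_take (hκ : ∀ κ ∈ κs, κ ∈ KCode w) (i : ℕ) :
    occursAt w (w ++ κs.flatten) i ↔ ∃ t ≤ κs.length, i = (κs.take t).flatten.length :=
  ⟨exists_eq_length_flatten_take_of_occursAt hκ,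
    fun ⟨t, _, hi⟩ => hi ▸ occursAt_length_flatten_take (fun κ h => (hκ κ h).1.1) t⟩

lemma strictMonoOn_length_flatten_take (hκ : ∀ κ ∈ κs, κ ≠ []) :
    StrictMonoOn (fun t => (κs.take t).flatten.length) (Set.Iic κs.length) :=
  strictMonoOn_Iic_of_lt_succ fun t ht => by
    have hne := hκ κs[t] (List.getElem_mem _)
    simp only [Order.succ_eq_add_one, List.take_add_one, List.getElem?_eq_getElem ht,
      Option.toList_some, List.flatten_append, List.length_append, List.flatten_singleton]
    exact Nat.lt_add_of_pos_right (List.length_pos_iff.mpr hne)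

end Clump

open Clump in
theorem clump_occurrence_positions_general {α : Type*} (w : List α)
    (κs : List (List α)) (hκ : ∀ κ ∈ κs, κ ∈ KCode w) :
    (∀ i, occursAt w (w ++ κs.flatten) i ↔
      ∃ t, t ≤ κs.length ∧ i = (w ++ (κs.take t).flatten).length - w.length) ∧
    {i | occursAt w (w ++ κs.flatten) i}.ncard = κs.length + 1 := by
  have hpos : {i | occursAt w (w ++ κs.flatten) i} =
      (fun t => (κs.take t).flatten.length) '' Set.Iic κs.length := by
    ext i
    simp only [Set.mem_ofPred_eq, Set.mem_image, Set.mem_Iic,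
      occursAt_iff_exists_length_flatten_take hκ, eq_comm]
  refine ⟨fun i => by simpa using occursAt_iff_exists_length_flatten_take hκ i, ?_⟩
  rw [hpos, (strictMonoOn_length_flatten_take fun κ h => (hκ κ h).1.2).injOn.ncard_image,
    Set.ncard_Iic_nat]

/-- for `κ₁, …, κ_m ∈ K(w)`, the word `w ++ κ₁ ++ ⋯ ++ κ_m` has
exactly `m + 1` occurrences of `w`, namely at the positions
`|w ++ κ₁ ++ ⋯ ++ κ_t| − |w|` for `t = 0, …, m`, and at no other position. -/
theorem clump_occurrence_positions {α : Type*} (w : List α) (hw : w ≠ [])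
    (κs : List (List α)) (hκ : ∀ κ ∈ κs, κ ∈ KCode w) :
    (∀ i, occursAt w (w ++ κs.flatten) i ↔
      ∃ t, t ≤ κs.length ∧ i = (w ++ (κs.take t).flatten).length - w.length) ∧
    {i | occursAt w (w ++ κs.flatten) i}.ncard = κs.length + 1 :=
  clump_occurrence_positions_general w κs hκ
end

section
/- Overlapping occurrences correspond exactly to autocorrelation extensions: for a nonempty word w, a word c ∈ C∘(w), a word T and a position i, one has (w occurs at position i in T and w occurs at position i + |c| in T) if and only if the word w ++ c occurs at position i in T. -/
section

variable {α : Type*}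

theorem length_eq_of_append_eq_append {w c e : List α} (h : w ++ c = e ++ w) :
    e.length = c.length := by
  have := congrArg List.length h
  simp only [List.length_append] at this
  omega

theorem List.suffix_of_append_eq_append {w c e : List α} (h : w ++ c = e ++ w)
    (hc : c.length ≤ w.length) : c <:+ w :=
  List.suffix_of_suffix_length_le (h ▸ List.suffix_append w c) (List.suffix_append e w) hc

theorem eq_of_append_eq_append_of_length_eq {w c d e f : List α} (hc : w ++ c = e ++ w)
    (hd : w ++ d = f ++ w) (hlen : d.length = c.length) (hcw : c.length ≤ w.length) :
    d = c := by
  have hcs : c <:+ w := List.suffix_of_append_eq_append hc hcw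
  have hds : d <:+ w := List.suffix_of_append_eq_append hd (hlen ▸ hcw)
  exact (List.suffix_of_suffix_length_le hds hcs hlen.le).eq_of_length hlen

theorem exists_append_eq_of_append_eq {w f y y' : List α} (h : w ++ y = f ++ w ++ y') :
    ∃ d, w ++ d = f ++ w ∧ y = d ++ y' := by
  have hy : y'.length ≤ y.length := by
    have := congrArg List.length h
    simp only [List.length_append] at this
    omega
  have hy's : y' <:+ w ++ y := h ▸ List.suffix_append _ y'
  obtain ⟨d, rfl⟩ := List.suffix_of_suffix_length_le hy's (List.suffix_append w y) hy
  exact ⟨d, List.append_cancel_right (by simpa only [List.append_assoc] using h), rfl⟩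

theorem occursAt.append_left {u v T : List α} {i : ℕ} (h : occursAt (u ++ v) T i) :
    occursAt u T i := by
  obtain ⟨x, y, rfl, rfl⟩ := h
  exact ⟨x, v ++ y, by simp only [List.append_assoc], rfl⟩

theorem occursAt.append_right_s13 {u v T : List α} {i : ℕ} (h : occursAt (u ++ v) T i) :
    occursAt v T (i + u.length) := by
  obtain ⟨x, y, rfl, rfl⟩ := h
  exact ⟨x ++ u, y, by simp only [List.append_assoc], List.length_append⟩

theorem occursAt.exists_append_of_occursAt_add {w T : List α} {i k : ℕ}
    (hi : occursAt w T i) (hk : occursAt w T (i + k)) :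
    ∃ d f, f.length = k ∧ w ++ d = f ++ w ∧ occursAt (w ++ d) T i := by
  obtain ⟨x, y, hT, rfl⟩ := hi
  obtain ⟨x', y', hT', hx'⟩ := hk
  have hxx' : x <+: x' :=
    List.prefix_of_prefix_length_le (l₃ := T) ⟨w ++ y, by rw [hT, List.append_assoc]⟩
      ⟨w ++ y', by rw [hT', List.append_assoc]⟩ (by omega)
  obtain ⟨f, rfl⟩ := hxx'
  have hshift : w ++ y = f ++ w ++ y' :=
    List.append_cancel_left (as := x) (by simpa only [List.append_assoc] using hT.symm.trans hT')
  obtain ⟨d, hd, rfl⟩ := exists_append_eq_of_append_eq hshift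
  exact ⟨d, f, by simpa using hx', hd, x, y', by simp [hT], rfl⟩

end

theorem overlap_iff_corr_extension_general {α : Type*} (w : List α)
    (c : List α) (hc : c ∈ CorrPos w) (T : List α) (i : ℕ) :
    (occursAt w T i ∧ occursAt w T (i + c.length)) ↔ occursAt (w ++ c) T i := by
  obtain ⟨⟨hcw, e, he⟩, -⟩ := hc
  constructor
  · rintro ⟨hi, hic⟩
    obtain ⟨d, f, hf, hd, hocc⟩ := hi.exists_append_of_occursAt_add hic
    have hdc : d = c := eq_of_append_eq_append_of_length_eq he hd
      ((length_eq_of_append_eq_append hd).symm.trans hf) hcw.le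
    exact hdc ▸ hocc
  · intro h
    refine ⟨h.append_left, ?_⟩
    rw [← length_eq_of_append_eq_append he]
    exact (he ▸ h).append_right_s13

/-- for `c ∈ C∘(w)`, `w` occurs at positions `i` and `i + |c|` in `T`
iff `w ++ c` occurs at position `i` in `T`. -/
theorem overlap_iff_corr_extension {α : Type*} (w : List α) (hw : w ≠ [])
    (c : List α) (hc : c ∈ CorrPos w) (T : List α) (i : ℕ) :
    (occursAt w T i ∧ occursAt w T (i + c.length)) ↔ occursAt (w ++ c) T i :=
  overlap_iff_corr_extension_general w c hc T i
end

section
/- In the Bernoulli model, for a nonempty word w, a word c ∈ C∘(w), and a position i with i + |w| + |c| ≤ n, the probability that a random text of length n has an occurrence of w at position i and an occurrence of w at position i + |c| equals π(w)·π(c). -/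
theorem sum_ite_forall_mem_eq_prod {ι α R : Type*} [Fintype ι] [DecidableEq ι] [Fintype α]
    [DecidableEq α] [CommSemiring R] (p : α → R) (hsum : ∑ a, p a = 1) (S : Finset ι) (g : ι → α) :
    ∑ T : ι → α, (if ∀ j ∈ S, T j = g j then ∏ j, p (T j) else 0) = ∏ j ∈ S, p (g j) := by
  -- With the indicator moved inside the product, the sum over `T` factors position by position.
  have hfactor : ∀ T : ι → α, (if ∀ j ∈ S, T j = g j then ∏ j, p (T j) else 0) =
      ∏ j, if j ∈ S then (if T j = g j then p (T j) else 0) else p (T j) := by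
    intro T
    split_ifs with hT
    · exact Finset.prod_congr rfl fun j _ => by split_ifs <;> simp_all
    · push Not at hT
      obtain ⟨j, hj, hne⟩ := hT
      exact (Finset.prod_eq_zero (Finset.mem_univ j) (by simp [hj, hne])).symm
  calc _ = ∑ T : ι → α, ∏ j, if j ∈ S then (if T j = g j then p (T j) else 0) else p (T j) :=
        Finset.sum_congr rfl fun T _ => hfactor T
    _ = ∏ j, ∑ a, if j ∈ S then (if a = g j then p a else 0) else p a := by
        rw [Fintype.prod_sum]
    _ = ∏ j, if j ∈ S then p (g j) else 1 := by
        refine Finset.prod_congr rfl fun j _ => ?_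
        split_ifs <;> simp [hsum]
    _ = ∏ j ∈ S, p (g j) := Fintype.prod_ite_mem S _

section Occurrence

variable {α : Type*}

theorem occursAt_iff_isPrefix_drop {v L : List α} {i : ℕ} (hi : i ≤ L.length) :
    occursAt v L i ↔ v <+: L.drop i := by
  constructor
  · rintro ⟨x, y, rfl, rfl⟩
    simp
  · rintro ⟨t, ht⟩
    exact ⟨L.take i, t, by rw [List.append_assoc, ht, List.take_append_drop], by simpa⟩

theorem occursAt_ofFn_iff {n i : ℕ} {v : List α} (h : i + v.length ≤ n) (T : Fin n → α) :
    occursAt v (List.ofFn T) i ↔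
      ∀ k, T ((Fin.natAddEmb i).trans (Fin.castLEEmb h) k) = v[k] := by
  rw [occursAt_iff_isPrefix_drop (by simp; omega), List.prefix_iff_getElem]
  simp only [List.length_drop, List.length_ofFn, List.getElem_drop, List.getElem_ofFn]
  exact ⟨fun ⟨_, hk⟩ k => (hk k k.2).symm, fun hk => ⟨by omega, fun j hj => (hk ⟨j, hj⟩).symm⟩⟩

theorem isPrefix_append_iff_of_append_eq {w c e U : List α} (he : w ++ c = e ++ w)
    (hc : c.length ≤ w.length) :
    w ++ c <+: U ↔ w <+: U ∧ w <+: U.drop c.length := by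
  have hlen : e.length = c.length := by
    simpa [Nat.add_comm] using (congrArg List.length he).symm
  constructor
  · intro hU
    refine ⟨(List.prefix_append w c).trans hU, ?_⟩
    obtain ⟨t, rfl⟩ := he ▸ hU
    simp [← hlen]
  · rintro ⟨hw, t, ht⟩
    have htake : U.take c.length = e := by
      calc U.take c.length = (U.take w.length).take c.length := by
            rw [List.take_take, min_eq_left hc]
        _ = (w ++ c).take c.length := by
            rw [← List.prefix_iff_eq_take.mp hw, List.take_append_of_le_length hc]
        _ = e := by rw [he, ← hlen, List.take_left]
    refine ⟨t, ?_⟩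
    rw [he, List.append_assoc, ht, ← htake, List.take_append_drop]

theorem occursAt_and_occursAt_iff_of_mem_corr {w c T : List α} {i : ℕ} (hc : c ∈ Corr w)
    (h : i + c.length ≤ T.length) :
    occursAt w T i ∧ occursAt w T (i + c.length) ↔ occursAt (w ++ c) T i := by
  obtain ⟨hlt, e, he⟩ := hc
  rw [occursAt_iff_isPrefix_drop (by omega), occursAt_iff_isPrefix_drop h,
    occursAt_iff_isPrefix_drop (by omega), ← List.drop_drop,
    isPrefix_append_iff_of_append_eq he hlt.le]

end Occurrence

open Classical in
theorem sum_ite_occursAt_ofFn {α R : Type*} [Fintype α] [CommSemiring R] [Nontrivial R]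
    (p : α → R) (hsum : ∑ a, p a = 1) (v : List α) {n i : ℕ} (h : i + v.length ≤ n) :
    ∑ T : Fin n → α, (if occursAt v (List.ofFn T) i then ∏ j, p (T j) else 0) =
      (v.map p).prod := by
  -- `a₀` only serves as the default of `getD` off the window, where it is never read.
  obtain ⟨a₀⟩ : Nonempty α := by
    by_contra hα
    simp [not_nonempty_iff.mp hα] at hsum
  set e := (Fin.natAddEmb i).trans (Fin.castLEEmb h)
  have hocc : ∀ T : Fin n → α, occursAt v (List.ofFn T) i ↔
      ∀ j ∈ Finset.univ.map e, T j = v.getD (j - i) a₀ := by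
    intro T
    rw [occursAt_ofFn_iff h]
    simp [e]
  calc _ = ∑ T : Fin n → α,
          (if ∀ j ∈ Finset.univ.map e, T j = v.getD (j - i) a₀ then ∏ j, p (T j) else 0) := by
        simp only [hocc]
    _ = ∏ j ∈ Finset.univ.map e, p (v.getD (j - i) a₀) := by
        convert sum_ite_forall_mem_eq_prod p hsum _ _
    _ = (v.map p).prod := by simp [e]

open Classical in
theorem bernoulli_overlap_probability_general {α : Type*} [Fintype α] (p : α → ℝ)
    (hsum : ∑ a, p a = 1)
    (w c : List α) (hc : c ∈ CorrPos w)
    (n i : ℕ) (hn : i + w.length + c.length ≤ n) :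
    ∑ T : Fin n → α,
      (if occursAt w (List.ofFn T) i ∧ occursAt w (List.ofFn T) (i + c.length)
        then ∏ j, p (T j) else 0)
    = (w.map p).prod * (c.map p).prod := by
  calc _ = ∑ T : Fin n → α,
          (if occursAt (w ++ c) (List.ofFn T) i then ∏ j, p (T j) else 0) := by
        refine Finset.sum_congr rfl fun T _ => if_congr ?_ rfl rfl
        exact occursAt_and_occursAt_iff_of_mem_corr hc.1 (by simp; omega)
    _ = ((w ++ c).map p).prod := sum_ite_occursAt_ofFn p hsum (w ++ c) (by simp; omega)
    _ = (w.map p).prod * (c.map p).prod := by rw [List.map_append, List.prod_append]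

open Classical in
/-- Bernoulli model: for `c ∈ C∘(w)` and `i + |w| + |c| ≤ n`, the
probability that a random text of length `n` has occurrences of `w` at positions
`i` and `i + |c|` equals `π(w)·π(c)`, where `π(v) = ∏_j p(v_j)`. -/
theorem bernoulli_overlap_probability {α : Type*} [Fintype α] (p : α → ℝ)
    (hp : ∀ a, 0 ≤ p a) (hsum : ∑ a, p a = 1)
    (w c : List α) (hw : w ≠ []) (hc : c ∈ CorrPos w)
    (n i : ℕ) (hn : i + w.length + c.length ≤ n) :
    ∑ T : Fin n → α,
      (if occursAt w (List.ofFn T) i ∧ occursAt w (List.ofFn T) (i + c.length)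
        then ∏ j, p (T j) else 0)
    = (w.map p).prod * (c.map p).prod :=
  bernoulli_overlap_probability_general p hsum w c hc n i hn
end

section
/- For a reduced finite set of nonempty words W = {w₁, …, w_r} (no word of W is a factor of a different word of W), and for any indices i, j: every element of M_{ij}(W) that does not belong to K_{ij} has w_j as a suffix; that is, M_{ij}(W) \ K_{ij} ⊆ A*·{w_j}, so there is a language L with M_{ij}(W) \ K_{ij} = L·{w_j}. -/
/-- The correlation set `C_{ij}` of a pair of words. -/
def CorrPair {α : Type*} (w₁ w₂ : List α) : Set (List α) :=
  {e | 0 < e.length ∧ e.length < w₂.length ∧ ∃ e', e' ≠ [] ∧ w₁ ++ e = e' ++ w₂}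

/-- The minimal correlation language `K_{ij} = C_{ij} \ C_{ij}·A⁺`. -/
def KPair {α : Type*} (w₁ w₂ : List α) : Set (List α) :=
  CorrPair w₁ w₂ \ lconc (CorrPair w₁ w₂) (Aplus α)

/-- `u` is a factor of `v`. -/
def IsFactor {α : Type*} (u v : List α) : Prop := ∃ x y, v = x ++ u ++ y

/-- The minimal language `M_{ij}(W)` for a finite set of words `W`: nonempty words
`m` with `w_i ++ m = e ++ w_j` for some `e`, and no word of `W` occurring strictly
inside `w_i ++ m`. -/
def MinLangSet {α : Type*} (W : Set (List α)) (wi wj : List α) : Set (List α) :=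
  {m | m ≠ [] ∧ (∃ e, wi ++ m = e ++ wj) ∧
    ∀ wl ∈ W, ∀ q, occursAt wl (wi ++ m) q →
      q = 0 ∨ q + wl.length = wi.length + m.length}

/-!
Let `m ∈ M_{ij}(W)`, so `w_i ++ m = e ++ w_j`. If `|m| ≥ |w_j|`, the word `w_j` is a suffix of
`m`. Otherwise `m ∈ C_{ij}`: the overlap `e` is nonempty, since `e = []` would make `w_i` a proper
factor of `w_j`. Moreover `m ∉ C_{ij}·A⁺`: a decomposition `m = c ++ t` with `c ∈ C_{ij}` and
`t ≠ []` yields an occurrence of `w_j` strictly inside `w_i ++ m`. Hence `m ∈ K_{ij}`.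
-/

theorem List.exists_eq_append_of_append_eq_append {α : Type*} {u m e w : List α}
    (h : u ++ m = e ++ w) (hlen : w.length ≤ m.length) : ∃ a, m = a ++ w := by
  rcases List.append_eq_append_iff.mp h with ⟨a, -, hm⟩ | ⟨b, -, hw⟩
  · exact ⟨a, hm⟩
  · have hb : b = [] := by
      have hw_len := congrArg List.length hw
      simp only [List.length_append] at hw_len
      exact List.length_eq_zero_iff.mp (by omega)
    exact ⟨[], by simpa [hb] using hw.symm⟩

theorem lconc_setOf_append_mem {α : Type*} {S : Set (List α)} {w : List α}
    (hS : ∀ m ∈ S, ∃ a, m = a ++ w) : lconc {a | a ++ w ∈ S} {w} = S := by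
  ext m
  constructor
  · rintro ⟨a, ha, _, rfl, rfl⟩
    exact ha
  · intro hm
    obtain ⟨a, rfl⟩ := hS m hm
    exact ⟨a, hm, w, rfl, rfl⟩

namespace MinLangSet

variable {α : Type*} {W : Set (List α)} {wi wj m : List α}

theorem mem_corrPair (hfac : wi ≠ wj → ¬ IsFactor wi wj) (hm : m ∈ MinLangSet W wi wj)
    (hlen : m.length < wj.length) : m ∈ CorrPair wi wj := by
  obtain ⟨hm_ne, ⟨e, he⟩, -⟩ := hm
  refine ⟨List.length_pos_iff.mpr hm_ne, hlen, e, ?_, he⟩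
  rintro rfl
  have hij : wi ≠ wj := by
    rintro rfl
    simp_all
  exact hfac hij ⟨[], m, by simpa using he.symm⟩

theorem notMem_lconc_corrPair_aplus (hj : wj ∈ W) (hm : m ∈ MinLangSet W wi wj) :
    m ∉ lconc (CorrPair wi wj) (Aplus α) := by
  rintro ⟨c, ⟨-, -, e, he_ne, hce⟩, t, ht, rfl⟩
  have hocc : occursAt wj (wi ++ (c ++ t)) e.length :=
    ⟨e, t, by rw [← List.append_assoc, hce], rfl⟩
  have hce_len := congrArg List.length hce
  have ht_pos := List.length_pos_iff.mpr ht
  simp only [List.length_append] at hce_len ⊢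
  rcases hm.2.2 wj hj e.length hocc with h0 | hend
  · exact he_ne (List.length_eq_zero_iff.mp h0)
  · simp only [List.length_append] at hend
    omega

theorem exists_eq_append_of_notMem_kPair (hfac : wi ≠ wj → ¬ IsFactor wi wj) (hj : wj ∈ W)
    (hm : m ∈ MinLangSet W wi wj) (hK : m ∉ KPair wi wj) : ∃ a, m = a ++ wj := by
  obtain ⟨e, he⟩ := hm.2.1
  refine List.exists_eq_append_of_append_eq_append he (not_lt.mp fun hlen => hK ?_)
  exact ⟨mem_corrPair hfac hm hlen, notMem_lconc_corrPair_aplus hj hm⟩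

end MinLangSet

theorem minLangSet_sdiff_kpair_general {α : Type*} (W : Set (List α))
    (hred : ∀ u ∈ W, ∀ v ∈ W, u ≠ v → ¬ IsFactor u v)
    (wi wj : List α) (hi : wi ∈ W) (hj : wj ∈ W) :
    MinLangSet W wi wj \ KPair wi wj ⊆ lconc (Set.univ : Set (List α)) {wj} ∧
    ∃ L : Set (List α), MinLangSet W wi wj \ KPair wi wj = lconc L {wj} := by
  have hsuffix : ∀ m ∈ MinLangSet W wi wj \ KPair wi wj, ∃ a, m = a ++ wj :=
    fun m hm => MinLangSet.exists_eq_append_of_notMem_kPair (hred wi hi wj hj) hj hm.1 hm.2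
  refine ⟨fun m hm => ?_, _, (lconc_setOf_append_mem hsuffix).symm⟩
  obtain ⟨a, rfl⟩ := hsuffix m hm
  exact ⟨a, trivial, wj, rfl, rfl⟩

/-- for a reduced finite set `W` of nonempty words and `w_i, w_j ∈ W`,
`M_{ij}(W) \ K_{ij} ⊆ A*·{w_j}`, hence `M_{ij}(W) \ K_{ij} = L·{w_j}` for some
language `L`. -/
theorem minLangSet_sdiff_kpair {α : Type*} (W : Set (List α)) (hfin : W.Finite)
    (hne : ∀ w ∈ W, w ≠ [])
    (hred : ∀ u ∈ W, ∀ v ∈ W, u ≠ v → ¬ IsFactor u v)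
    (wi wj : List α) (hi : wi ∈ W) (hj : wj ∈ W) :
    MinLangSet W wi wj \ KPair wi wj ⊆ lconc (Set.univ : Set (List α)) {wj} ∧
    ∃ L : Set (List α), MinLangSet W wi wj \ KPair wi wj = lconc L {wj} :=
  minLangSet_sdiff_kpair_general W hred wi wj hi hj
end
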